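/- There is an absolute constant C such that for every SLP P of size m over the alphabet {0,1} there exists a udpda A over {a} of size at most C·m such that the characteristic sequence of L(A) equals 0 · str(P) · 0^ω; moreover A can be chosen so that (q0,⊥) ⊢* (q̄,⊥) by a computation reading exactly a^{|str(P)|}, where q0 is the initial state and q̄ is a non-final state at which no move is available. -/

import Mathlib

/-- A straight-line program in Chomsky normal form over alphabet `α`:
nonterminals are `Fin n`, each production is either a terminal or a pair of
nonterminals with strictly smaller indices (this index condition is a
topological ordering witnessing acyclicity of the SLP).  The size of such an
SLP is its number `n` of nonterminals. -/
structure CnfSLP (α : Type) where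
  n : ℕ
  ax : Fin n
  prod : Fin n → α ⊕ (Fin n × Fin n)
  wf : ∀ (i B C : Fin n), prod i = Sum.inr (B, C) → B < i ∧ C < i

namespace CnfSLP

variable {α : Type}

/-- The word generated by nonterminal `i`. -/
def strAt (P : CnfSLP α) : Fin P.n → List α
  | i =>
    match h : P.prod i with
    | Sum.inl a => [a]
    | Sum.inr (B, C) => P.strAt B ++ P.strAt C
termination_by i => i.val
decreasing_by
  · exact (P.wf i B C h).1
  · exact (P.wf i B C h).2

/-- The word generated by the SLP (from its axiom). -/
def str (P : CnfSLP α) : List α := P.strAt P.ax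

/-- The size of an SLP: the number of nonterminals (in Chomsky normal form). -/
def size (P : CnfSLP α) : ℕ := P.n

end CnfSLP

/-- `Generates u w c` means the infinite sequence `u · w^ω` is well defined
(`w` is nonempty) and equals the sequence `c`. -/
def Generates {α : Type} (u w : List α) (c : ℕ → α) : Prop :=
  w ≠ [] ∧ ∀ i : ℕ,
    (if i < u.length then u[i]? else w[(i - u.length) % w.length]?) = some (c i)

/-- The data of a unary pushdown automaton over the input alphabet `{a}`
(a transition whose `Bool` component is `true` reads `a`, otherwise it
reads `ε`): bottom-of-stack symbol, initial state, final states, transitions. -/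
structure PrePDA (Q Γ : Type) where
  bot : Γ
  init : Q
  final : Set Q
  δ : Set (Q × Bool × Γ × Q × List Γ)

namespace PrePDA

variable {Q Γ : Type}

/-- Valid stack contents: a word in `(Γ∖{⊥})*⊥`. -/
def IsStack (A : PrePDA Q Γ) (s : List Γ) : Prop :=
  ∃ s', A.bot ∉ s' ∧ s = s' ++ [A.bot]

/-- A move from configuration `c1` to `c2` reading `a` (if `σ = true`)
or `ε` (if `σ = false`). -/
def Move (A : PrePDA Q Γ) (c1 : Q × List Γ) (σ : Bool) (c2 : Q × List Γ) : Prop :=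
  ∃ γ w, (c1.1, σ, γ, c2.1, w) ∈ A.δ ∧
    (((γ ≠ A.bot ∨ w ≠ []) ∧ ∃ s', c1.2 = γ :: s' ∧ c2.2 = w ++ s') ∨
      (γ = A.bot ∧ w = [] ∧ c1.2 = [A.bot] ∧ c2.2 = [A.bot]))

/-- `Steps A c1 k c2`: there is a finite computation from `c1` to `c2`
reading the word `a^k`. -/
inductive Steps (A : PrePDA Q Γ) : Q × List Γ → ℕ → Q × List Γ → Prop
  | refl (c : Q × List Γ) : Steps A c 0 c
  | tail {c1 : Q × List Γ} {k : ℕ} {c2 : Q × List Γ} {σ : Bool} {c3 : Q × List Γ} :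
      Steps A c1 k c2 → A.Move c2 σ c3 → Steps A c1 (k + (if σ then 1 else 0)) c3

/-- The language of the automaton, as a set of natural numbers:
`a^k` is accepted iff `k` is in this set (acceptance by final state,
starting from the configuration `(q₀, ⊥)`). -/
def lang (A : PrePDA Q Γ) : Set ℕ :=
  {k | ∃ c : Q × List Γ, A.Steps (A.init, [A.bot]) k c ∧ c.1 ∈ A.final}

end PrePDA

/-- A unary deterministic pushdown automaton (udpda): finitely many states and
stack symbols, well-formed transitions (each pushed word has length at most 2,
and the bottom symbol is neither pushed above other symbols nor removed), and
at most one move available at every configuration. -/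
structure UDPDA (Q Γ : Type) extends PrePDA Q Γ where
  finQ : Finite Q
  finΓ : Finite Γ
  wf : ∀ q1 σ γ q2 w, (q1, σ, γ, q2, w) ∈ δ →
    w.length ≤ 2 ∧
      ((γ ≠ bot ∧ bot ∉ w) ∨ (γ = bot ∧ (w = [] ∨ ∃ w', bot ∉ w' ∧ w = w' ++ [bot])))
  det : ∀ c σ1 c1 σ2 c2, toPrePDA.IsStack c.2 →
    toPrePDA.Move c σ1 c1 → toPrePDA.Move c σ2 c2 → σ1 = σ2 ∧ c1 = c2

namespace UDPDA

variable {Q Γ : Type}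

/-- The size of a udpda: `|Q| · |Γ|`. -/
noncomputable def size (A : UDPDA Q Γ) : ℕ := Nat.card Q * Nat.card Γ

/-- The language of a udpda. -/
def lang (A : UDPDA Q Γ) : Set ℕ := A.toPrePDA.lang

end UDPDA

/-!
The automaton runs a leftmost derivation of `str P` on its stack, which holds the nonterminals
whose expansions remain to be read. A nonterminal with production `B C` on top is replaced by
`B C` with an ε-move; a terminal production `t` is popped while reading one `a`, and `t` is
stored in the state, which is final exactly when `t = true`. With four states and `n + 1` stack
symbols the size is at most `8 n`. Soundness is an invariant of all reachable configurations
(the stack derives the unread suffix of `str P`); completeness holds because a nonterminal on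
top of the stack is reduced to its first letter by ε-moves followed by one `a`-move. Once
`str P` is consumed the bottom symbol is exposed and an ε-move enters a dead halting state.
-/

lemma List.getD_eq_and_drop_succ_eq_of_drop_eq_cons {α : Type} {l r : List α} {k : ℕ} {t d : α}
    (h : l.drop k = t :: r) : l.getD k d = t ∧ l.drop (k + 1) = r := by
  have hk : k < l.length := by
    by_contra hk
    simp [List.drop_eq_nil_of_le (not_lt.mp hk)] at h
  rw [List.drop_eq_getElem_cons hk, List.cons.injEq] at h
  exact ⟨by rw [List.getD_eq_getElem _ _ hk, h.1], h.2⟩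

namespace CnfSLP

variable {α : Type} (P : CnfSLP α)

lemma strAt_of_prod_inl {i : Fin P.n} {a : α} (h : P.prod i = Sum.inl a) :
    P.strAt i = [a] := by
  rw [strAt]; split <;> simp_all

lemma strAt_of_prod_inr {i B C : Fin P.n} (h : P.prod i = Sum.inr (B, C)) :
    P.strAt i = P.strAt B ++ P.strAt C := by
  rw [strAt]; split <;> simp_all

lemma strAt_ne_nil (i : Fin P.n) : P.strAt i ≠ [] := by
  induction i using WellFoundedLT.induction with
  | _ i ih =>
    rcases h : P.prod i with a | ⟨B, C⟩
    · simp [P.strAt_of_prod_inl h]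
    · simp [P.strAt_of_prod_inr h, ih B (P.wf i B C h).1]

end CnfSLP

namespace PrePDA

variable {Q Γ : Type} {A : PrePDA Q Γ}

lemma Steps.single {c c' : Q × List Γ} {σ : Bool} (h : A.Move c σ c') :
    A.Steps c (if σ then 1 else 0) c' := by
  simpa using Steps.tail (Steps.refl c) h

lemma Steps.trans {c₁ c₂ c₃ : Q × List Γ} {j k : ℕ}
    (h₁ : A.Steps c₁ j c₂) (h₂ : A.Steps c₂ k c₃) : A.Steps c₁ (j + k) c₃ := by
  induction h₂ with
  | refl => exact h₁
  | tail _ hm ih => simpa [Nat.add_assoc] using ih.tail hm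

lemma Steps.eps_head {c₁ c₂ c₃ : Q × List Γ} {k : ℕ}
    (h₁ : A.Move c₁ false c₂) (h₂ : A.Steps c₂ k c₃) : A.Steps c₁ k c₃ := by
  simpa using (Steps.single h₁).trans h₂

lemma Steps.invariant (I : ℕ → Q × List Γ → Prop)
    (hI : ∀ k c σ c', I k c → A.Move c σ c' → I (k + if σ then 1 else 0) c')
    {c c' : Q × List Γ} {k j : ℕ} (h₀ : I k c) (h : A.Steps c j c') : I (k + j) c' := by
  induction h with
  | refl => exact h₀
  | tail _ hm ih => simpa [Nat.add_assoc] using hI _ _ _ _ ih hm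

lemma move_cons {q q' : Q} {σ : Bool} {γ : Γ} {w : List Γ} (h : (q, σ, γ, q', w) ∈ A.δ)
    (hγw : γ ≠ A.bot ∨ w ≠ []) (s : List Γ) : A.Move (q, γ :: s) σ (q', w ++ s) :=
  ⟨γ, w, h, Or.inl ⟨hγw, s, rfl, rfl⟩⟩

lemma move_bot {q q' : Q} {σ : Bool} (h : (q, σ, A.bot, q', []) ∈ A.δ) :
    A.Move (q, [A.bot]) σ (q', [A.bot]) :=
  ⟨A.bot, [], h, Or.inr ⟨rfl, rfl, rfl, rfl⟩⟩

lemma exists_mem_δ_of_move {c c' : Q × List Γ} {σ : Bool} (h : A.Move c σ c') :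
    ∃ γ w, (c.1, σ, γ, c'.1, w) ∈ A.δ :=
  let ⟨γ, w, hδ, _⟩ := h; ⟨γ, w, hδ⟩

lemma not_move_nil (q : Q) (σ : Bool) (c' : Q × List Γ) : ¬ A.Move (q, []) σ c' := by
  rintro ⟨γ, w, -, ⟨-, s', h, -⟩ | ⟨-, -, h, -⟩⟩ <;> simp at h

lemma exists_of_move_cons {q : Q} {γ : Γ} {s : List Γ} {σ : Bool} {c' : Q × List Γ}
    (h : A.Move (q, γ :: s) σ c') :
    ∃ w, (q, σ, γ, c'.1, w) ∈ A.δ ∧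
      (((γ ≠ A.bot ∨ w ≠ []) ∧ c'.2 = w ++ s) ∨ (γ = A.bot ∧ w = [] ∧ c'.2 = [A.bot])) := by
  obtain ⟨γ', w, hδ, ⟨hγw, s', hs, hc'⟩ | ⟨rfl, rfl, hs, hc'⟩⟩ := h <;>
    obtain ⟨rfl, rfl⟩ := List.cons.inj hs
  · exact ⟨w, hδ, Or.inl ⟨hγw, hc'⟩⟩
  · exact ⟨[], hδ, Or.inr ⟨rfl, rfl, hc'⟩⟩

lemma move_deterministic
    (hδ : ∀ q σ₁ γ q₁ w₁ σ₂ q₂ w₂, (q, σ₁, γ, q₁, w₁) ∈ A.δ → (q, σ₂, γ, q₂, w₂) ∈ A.δ →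
      σ₁ = σ₂ ∧ q₁ = q₂ ∧ w₁ = w₂)
    {c c₁ c₂ : Q × List Γ} {σ₁ σ₂ : Bool} (h₁ : A.Move c σ₁ c₁) (h₂ : A.Move c σ₂ c₂) :
    σ₁ = σ₂ ∧ c₁ = c₂ := by
  obtain ⟨q, _ | ⟨γ, s⟩⟩ := c
  · exact absurd h₁ (not_move_nil _ _ _)
  obtain ⟨w₁, hδ₁, hs₁⟩ := exists_of_move_cons h₁
  obtain ⟨w₂, hδ₂, hs₂⟩ := exists_of_move_cons h₂
  obtain ⟨rfl, hq, rfl⟩ := hδ _ _ _ _ _ _ _ _ hδ₁ hδ₂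
  refine ⟨rfl, Prod.ext hq ?_⟩
  rcases hs₁ with ⟨hγw, hs₁⟩ | ⟨hγ, hw, hs₁⟩ <;> rcases hs₂ with ⟨hγw', hs₂⟩ | ⟨hγ', hw', hs₂⟩
  · exact hs₁.trans hs₂.symm
  · exact absurd hγw (by simp [hγ', hw'])
  · exact absurd hγw' (by simp [hγ, hw])
  · exact hs₁.trans hs₂.symm

end PrePDA

inductive SlpState : Type
  | start
  | run (b : Bool)
  | halt
deriving DecidableEq, Fintype

namespace CnfSLP

variable (P : CnfSLP Bool)

/-- The state `run b` remembers the letter `b` read last (`false` for the leading `0` of the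
characteristic sequence). -/
def transition :
    SlpState → Option (Fin P.n) → Option (Bool × SlpState × List (Option (Fin P.n)))
  | .start, none => some (false, .run false, [some P.ax, none])
  | .run b, some X =>
    match P.prod X with
    | .inl t => some (true, .run t, [])
    | .inr (B, C) => some (false, .run b, [some B, some C])
  | .run _, none => some (false, .halt, [])
  | _, _ => none

def toPrePDA : PrePDA SlpState (Option (Fin P.n)) where
  bot := none
  init := .start
  final := {.run true}
  δ := {x | P.transition x.1 x.2.2.1 = some (x.2.1, x.2.2.2.1, x.2.2.2.2)}

variable {P}

lemma mem_toPrePDA_δ {q q' : SlpState} {σ : Bool} {γ : Option (Fin P.n)}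
    {w : List (Option (Fin P.n))} :
    (q, σ, γ, q', w) ∈ P.toPrePDA.δ ↔ P.transition q γ = some (σ, q', w) :=
  Iff.rfl

lemma transition_wf {q q' : SlpState} {σ : Bool} {γ : Option (Fin P.n)}
    {w : List (Option (Fin P.n))} (h : P.transition q γ = some (σ, q', w)) :
    w.length ≤ 2 ∧ ((γ ≠ none ∧ none ∉ w) ∨
      (γ = none ∧ (w = [] ∨ ∃ w', none ∉ w' ∧ w = w' ++ [none]))) := by
  rcases q with _ | b | _ <;> rcases γ with _ | X <;> simp only [transition] at h <;>
    (try split at h) <;> obtain ⟨-, -, rfl⟩ := h <;> simp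
  exact ⟨[some P.ax], by simp, rfl⟩

variable (P)

def toUDPDA : UDPDA SlpState (Option (Fin P.n)) where
  toPrePDA := P.toPrePDA
  finQ := inferInstance
  finΓ := inferInstance
  wf _ _ _ _ _ h := transition_wf h
  det _ _ _ _ _ _ h₁ h₂ := PrePDA.move_deterministic (fun _ _ _ _ _ _ _ _ h h' => by
    simp_all [mem_toPrePDA_δ]) h₁ h₂

def charSeq (k : ℕ) : Bool := (false :: P.str).getD k false

def ReachInv (k : ℕ) (c : SlpState × List (Option (Fin P.n))) : Prop :=
  (k = 0 ∧ c = (.start, [none])) ∨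
  (∃ v : List (Fin P.n), v.flatMap P.strAt = P.str.drop k ∧
    c = (.run (P.charSeq k), v.map some ++ [none])) ∨
  c = (.halt, [none])

variable {P}

lemma charSeq_succ_and_drop_succ {k : ℕ} {t : Bool} {r : List Bool}
    (h : P.str.drop k = t :: r) : P.charSeq (k + 1) = t ∧ P.str.drop (k + 1) = r :=
  List.getD_eq_and_drop_succ_eq_of_drop_eq_cons h

lemma reachInv_of_move {k : ℕ} {c c' : SlpState × List (Option (Fin P.n))} {σ : Bool}
    (hc : P.ReachInv k c) (hm : P.toPrePDA.Move c σ c') :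
    P.ReachInv (k + if σ then 1 else 0) c' := by
  obtain ⟨q', s'⟩ := c'
  rcases hc with ⟨rfl, rfl⟩ | ⟨_ | ⟨X, v⟩, hv, rfl⟩ | rfl
  · obtain ⟨w, hδ, hs⟩ := PrePDA.exists_of_move_cons hm
    simp only [mem_toPrePDA_δ, transition, Option.some.injEq, Prod.mk.injEq] at hδ
    obtain ⟨rfl, rfl, rfl⟩ := hδ
    obtain ⟨-, hs⟩ | ⟨-, h, -⟩ := hs
    · refine Or.inr (Or.inl ⟨[P.ax], by simp [str], by simp_all [charSeq]⟩)
    · simp at h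
  · obtain ⟨w, hδ, ⟨hγw, -⟩ | ⟨-, -, hs⟩⟩ := PrePDA.exists_of_move_cons hm <;>
      simp only [mem_toPrePDA_δ, transition, Option.some.injEq, Prod.mk.injEq] at hδ
    · exact absurd hγw (by simp [toPrePDA, hδ.2.2])
    · obtain ⟨rfl, rfl, -⟩ := hδ
      exact Or.inr (Or.inr (by simp_all [toPrePDA]))
  · obtain ⟨w, hδ, ⟨-, hs⟩ | ⟨hγ, -⟩⟩ := PrePDA.exists_of_move_cons hm
    · simp only [mem_toPrePDA_δ, transition] at hδ
      simp only [List.flatMap_cons] at hv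
      rcases hX : P.prod X with t | ⟨B, C⟩ <;>
        simp only [hX, Option.some.injEq, Prod.mk.injEq] at hδ <;> obtain ⟨rfl, rfl, rfl⟩ := hδ
      · rw [P.strAt_of_prod_inl hX, List.singleton_append] at hv
        obtain ⟨hchar, hdrop⟩ := charSeq_succ_and_drop_succ hv.symm
        exact Or.inr (Or.inl ⟨v, hdrop.symm, by simp_all⟩)
      · refine Or.inr (Or.inl ⟨B :: C :: v, ?_, by simp_all⟩)
        simp [← hv, P.strAt_of_prod_inr hX]
    · exact absurd hγ (by simp [toPrePDA])
  · obtain ⟨γ, w, hδ⟩ := PrePDA.exists_mem_δ_of_move hm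
    simp [mem_toPrePDA_δ, transition] at hδ

lemma reachInv_of_steps {k : ℕ} {c : SlpState × List (Option (Fin P.n))}
    (h : P.toPrePDA.Steps (.start, [none]) k c) : P.ReachInv k c := by
  simpa using PrePDA.Steps.invariant P.ReachInv (fun _ _ _ _ => reachInv_of_move)
    (Or.inl ⟨rfl, rfl⟩) h

lemma exists_steps_read_first (X : Fin P.n) (b : Bool) (s : List (Option (Fin P.n))) :
    ∃ (t : Bool) (w : List (Fin P.n)),
      P.toPrePDA.Steps (.run b, some X :: s) 1 (.run t, w.map some ++ s) ∧
        P.strAt X = t :: w.flatMap P.strAt := by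
  induction X using WellFoundedLT.induction generalizing s with
  | _ X ih =>
    rcases hX : P.prod X with t | ⟨B, C⟩
    · have hm : P.toPrePDA.Move (.run b, some X :: s) true (.run t, [] ++ s) :=
        PrePDA.move_cons (by simp [mem_toPrePDA_δ, transition, hX]) (by simp [toPrePDA]) s
      exact ⟨t, [], by simpa using PrePDA.Steps.single hm, P.strAt_of_prod_inl hX⟩
    · have hm : P.toPrePDA.Move (.run b, some X :: s) false
          (.run b, [some B, some C] ++ s) :=
        PrePDA.move_cons (by simp [mem_toPrePDA_δ, transition, hX]) (by simp [toPrePDA]) s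
      obtain ⟨t, w, hsteps, hB⟩ := ih B (P.wf X B C hX).1 (some C :: s)
      refine ⟨t, w ++ [C], PrePDA.Steps.eps_head hm (by simpa using hsteps), ?_⟩
      simp [P.strAt_of_prod_inr hX, hB]

lemma exists_steps_of_le_length {k : ℕ} (hk : k ≤ P.str.length) :
    ∃ v : List (Fin P.n), v.flatMap P.strAt = P.str.drop k ∧
      P.toPrePDA.Steps (.start, [none]) k (.run (P.charSeq k), v.map some ++ [none]) := by
  induction k with
  | zero =>
    have hm : P.toPrePDA.Move (.start, [none]) false (.run false, [some P.ax, none] ++ []) :=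
      PrePDA.move_cons (by simp [mem_toPrePDA_δ, transition]) (by simp) []
    exact ⟨[P.ax], by simp [str], by simpa [charSeq] using PrePDA.Steps.single hm⟩
  | succ k ih =>
    obtain ⟨_ | ⟨X, v⟩, hv, hsteps⟩ := ih (by omega)
    · simp [eq_comm, List.drop_eq_nil_iff] at hv
      omega
    obtain ⟨t, w, hread, hX⟩ := exists_steps_read_first X (P.charSeq k) (v.map some ++ [none])
    rw [List.flatMap_cons, hX, List.cons_append] at hv
    obtain ⟨hchar, hdrop⟩ := charSeq_succ_and_drop_succ hv.symm
    refine ⟨w ++ v, by simp [hdrop], ?_⟩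
    simpa [hchar] using hsteps.trans hread

variable (P)

lemma mem_lang_toUDPDA_iff (i : ℕ) : i ∈ P.toUDPDA.lang ↔ P.charSeq i = true := by
  constructor
  · rintro ⟨c, hsteps, hfinal⟩
    rcases reachInv_of_steps hsteps with ⟨-, rfl⟩ | ⟨v, -, rfl⟩ | rfl <;>
      simp_all [toUDPDA, toPrePDA]
  · intro hi
    have hlen : i ≤ P.str.length := by
      by_contra hlen
      rw [charSeq, List.getD_eq_default _ _ (by simp; omega)] at hi
      exact Bool.false_ne_true hi
    obtain ⟨v, -, hsteps⟩ := exists_steps_of_le_length hlen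
    exact ⟨_, hsteps, by simp [toUDPDA, toPrePDA, hi]⟩

lemma steps_halt :
    P.toPrePDA.Steps (.start, [none]) P.str.length (.halt, [none]) := by
  obtain ⟨v, hv, hsteps⟩ := exists_steps_of_le_length (le_refl P.str.length)
  obtain rfl : v = [] := List.eq_nil_iff_forall_not_mem.2 fun X hX =>
    P.strAt_ne_nil X (List.flatMap_eq_nil_iff.1 (hv.trans List.drop_length) X hX)
  have hm : P.toPrePDA.Move (.run (P.charSeq P.str.length), [none]) false (.halt, [none]) :=
    PrePDA.move_bot (by simp [transition, toPrePDA])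
  simpa using hsteps.tail hm

lemma not_move_halt (s : List (Option (Fin P.n))) (σ : Bool)
    (c' : SlpState × List (Option (Fin P.n))) : ¬ P.toPrePDA.Move (.halt, s) σ c' := by
  rintro hm
  obtain ⟨γ, w, hδ⟩ := PrePDA.exists_mem_δ_of_move hm
  cases γ <;> simp [mem_toPrePDA_δ, transition] at hδ

lemma size_toUDPDA : P.toUDPDA.size ≤ 8 * P.size := by
  have hn : 1 ≤ P.n := P.ax.pos
  have hQ : Nat.card SlpState = 4 := by rw [Nat.card_eq_fintype_card]; rfl
  simp only [UDPDA.size, hQ, Nat.card_eq_fintype_card, Fintype.card_option, Fintype.card_fin,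
    size]
  omega

end CnfSLP

/-- There is an absolute constant `C` such that for every SLP
`P` of size `m` over `{0,1}` there exists a udpda `A` over `{a}` of size at
most `C·m` whose language has characteristic sequence `0 · str(P) · 0^ω`;
moreover `A` can be chosen with a computation `(q₀,⊥) ⊢* (q̄,⊥)` reading
exactly `a^{|str(P)|}`, where `q̄` is a non-final state at which no move is
available. -/
theorem slp_to_udpda :
    ∃ C : ℕ, ∀ P : CnfSLP Bool,
      ∃ (Q Γ : Type) (A : UDPDA Q Γ) (qbar : Q),
        A.size ≤ C * P.size ∧
        (∀ i : ℕ, i ∈ A.lang ↔ (false :: P.str).getD i false = true) ∧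
        A.toPrePDA.Steps (A.init, [A.bot]) P.str.length (qbar, [A.bot]) ∧
        qbar ∉ A.final ∧
        (∀ (s : List Γ) (σ : Bool) (c' : Q × List Γ), ¬ A.toPrePDA.Move (qbar, s) σ c') :=
  ⟨8, fun P => ⟨_, _, P.toUDPDA, .halt, P.size_toUDPDA, P.mem_lang_toUDPDA_iff, P.steps_halt,
    by simp [CnfSLP.toUDPDA, CnfSLP.toPrePDA], P.not_move_halt⟩⟩
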